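/- Let p(z) ∈ ℝ[z] have all zeros in the strip {z : |Im z| ≤ μ} and let λ > 0. Then all zeros of the polynomial g(D)p, where g(z) = sin(λz)/z acts as the differential operator Σ_{k≥0} (−1)^k λ^{2k+1} D^{2k}/((2k+1)!), lie in the strip {z : |Im z| ≤ δ} with δ = √(max(μ² − λ²/3, 0)). -/

import Mathlib

/-!
Write `P` for an antiderivative of `p`, so that the polynomial in question is `sin (l D) P`.
By Taylor's formula `sin (c D)` and `cos (c D)` act on polynomials as
`f ↦ (f (z + i c) - f (z - i c)) / 2i` and `f ↦ (f (z + i c) + f (z - i c)) / 2`, which makes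
`sin (2 c D) = 2 cos (c D) sin (c D)` a one-line identity. Iterating it,
`sin (l D) / D = 2 ^ m ∏_{k=1}^m cos (l D / 2 ^ k) ∘ sin (l D / 2 ^ m) / D`.

If the zeros of a real polynomial `q` satisfy `(Im r)² ≤ B`, the zeros `z` of
`q (z + i c) + q (z - i c)` satisfy `(Im z)² ≤ max (B - c²) 0`: pairing each zero `r` with `conj r`,
`|q (z + i c)| / |q (z - i c)|` is a product of factors `> 1` as soon as `B - c² < (Im z)²`.
Since `∑_{k=1}^m 4^{-k} = (1 - 4^{-m}) / 3`, the zeros of `sin (l D) / D p` then satisfy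
`(Im z)² ≤ max (B_m - l² (1 - 4^{-m}) / 3) 0`, where `B_m` bounds `(Im r)²` over the zeros of
`sin (ε D) / (ε D) p`, `ε = l / 2 ^ m`. That polynomial tends to `p` coefficientwise as `ε → 0`,
so by continuity of roots `B_m = (μ + δ)²` works for large `m`; let `m → ∞`, then `δ → 0`.
-/

open Complex Polynomial

open Finset Filter Topology
open scoped Nat ComplexConjugate

theorem Finset.sum_range_two_mul {M : Type*} [AddCommMonoid M] (f : ℕ → M) (n : ℕ) :
    ∑ k ∈ range (2 * n), f k = ∑ j ∈ range n, (f (2 * j) + f (2 * j + 1)) := by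
  induction n with
  | zero => simp
  | succ n ih => rw [Nat.mul_succ, sum_range_succ, sum_range_succ, sum_range_succ, ih, add_assoc]

namespace Polynomial

theorem exists_derivative_eq {K : Type*} [Field K] [CharZero K] (p : K[X]) :
    ∃ P : K[X], derivative P = p := by
  induction p using Polynomial.induction_on' with
  | add p q hp hq =>
    obtain ⟨P, rfl⟩ := hp
    obtain ⟨Q, rfl⟩ := hq
    exact ⟨P + Q, derivative_add⟩
  | monomial n a =>
    refine ⟨monomial (n + 1) (a / (n + 1)), ?_⟩
    rw [derivative_monomial]
    push_cast
    rw [div_mul_cancel₀ _ (Nat.cast_add_one_ne_zero n)]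

theorem aeval_add_eq_sum_iterate_derivative {K L : Type*} [Field K] [Field L] [CharZero L]
    [Algebra K L] (q : K[X]) (z w : L) {N : ℕ} (hN : q.natDegree < N) :
    aeval (z + w) q = ∑ k ∈ range N, aeval z (derivative^[k] q) * w ^ k / k ! := by
  set Q := q.map (algebraMap K L)
  have hQ : (taylor z Q).natDegree < N := by
    rwa [natDegree_taylor, natDegree_map]
  rw [aeval_def, ← eval_map, add_comm, ← taylor_eval, eval_eq_sum_range' hQ]
  refine sum_congr rfl fun k _ => ?_
  have hD : derivative^[k] Q = k ! • hasseDeriv k Q :=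
    (congrFun (factorial_smul_hasseDeriv k) Q).symm
  rw [taylor_coeff, aeval_def, ← eval_map, ← iterate_derivative_map, hD, eval_smul, nsmul_eq_mul,
    mul_comm _ (eval z _), mul_assoc, mul_div_assoc,
    mul_div_cancel_left₀ _ (Nat.cast_ne_zero.2 k.factorial_ne_zero)]

end Polynomial

/-- `sin (c D) / D` applied to `p`. -/
noncomputable def sinOverD (c : ℝ) (p : ℝ[X]) : ℝ[X] :=
  ∑ k ∈ range (p.natDegree / 2 + 1),
    C ((-1 : ℝ) ^ k * c ^ (2 * k + 1) / (2 * k + 1)!) * derivative^[2 * k] p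

theorem sinOverD_eq_sum (c : ℝ) (p : ℝ[X]) {M : ℕ} (hM : p.natDegree < 2 * M) :
    sinOverD c p = ∑ k ∈ range M,
      C ((-1 : ℝ) ^ k * c ^ (2 * k + 1) / (2 * k + 1)!) * derivative^[2 * k] p := by
  refine sum_subset (range_subset_range.2 (by omega)) fun k _ hk => ?_
  rw [iterate_derivative_eq_zero (by simp at hk; omega), mul_zero]

theorem aeval_add_sub_aeval_sub_eq_aeval_sinOverD {P p : ℝ[X]} (hP : derivative P = p) (c : ℝ)
    (z : ℂ) :
    aeval (z + c * I) P - aeval (z - c * I) P = 2 * I * aeval z (sinOverD c p) := by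
  set M := P.natDegree + 1
  have hPM : P.natDegree < 2 * M := by omega
  have hpM : p.natDegree < 2 * M := by
    have := natDegree_derivative_le P; rw [hP] at this; omega
  rw [sub_eq_add_neg z, aeval_add_eq_sum_iterate_derivative P z _ hPM,
    aeval_add_eq_sum_iterate_derivative P z _ hPM, ← sum_sub_distrib, sum_range_two_mul,
    sinOverD_eq_sum c p hpM, map_sum, mul_sum]
  refine sum_congr rfl fun j _ => ?_
  have hodd : derivative^[2 * j + 1] P = derivative^[2 * j] p := by
    rw [Function.iterate_succ_apply, hP]
  have hI : ((c : ℂ) * I) ^ (2 * j + 1) = (-1) ^ j * c ^ (2 * j + 1) * I := by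
    rw [mul_pow, pow_succ I, pow_mul, I_sq]; ring
  rw [hodd, (even_two_mul j).neg_pow, (odd_two_mul_add_one j).neg_pow, hI, map_mul, aeval_C]
  simp only [Complex.coe_algebraMap]
  push_cast
  ring

theorem aeval_sinOverD_two_mul (c : ℝ) (p : ℝ[X]) (z : ℂ) :
    aeval z (sinOverD (2 * c) p) =
      aeval (z + c * I) (sinOverD c p) + aeval (z - c * I) (sinOverD c p) := by
  obtain ⟨P, hP⟩ := exists_derivative_eq p
  refine mul_left_cancel₀ (mul_ne_zero two_ne_zero I_ne_zero) ?_
  rw [mul_add, ← aeval_add_sub_aeval_sub_eq_aeval_sinOverD hP,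
    ← aeval_add_sub_aeval_sub_eq_aeval_sinOverD hP, ← aeval_add_sub_aeval_sub_eq_aeval_sinOverD hP,
    add_sub_cancel_right, sub_add_cancel]
  push_cast
  ring_nf

theorem Multiset.prod_map_lt_prod_map_of_nonneg {R ι : Type*} [CommSemiring R] [PartialOrder R]
    [IsStrictOrderedRing R] {s : Multiset ι} (hs : s ≠ 0) (f g : ι → R)
    (h0 : ∀ i ∈ s, 0 ≤ f i) (h : ∀ i ∈ s, f i < g i) : (s.map f).prod < (s.map g).prod := by
  obtain ⟨a, ha⟩ := Multiset.exists_mem_of_ne_zero hs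
  obtain ⟨t, rfl⟩ := Multiset.exists_cons_of_mem ha
  simp only [Multiset.mem_cons, forall_eq_or_imp] at h0 h
  simp only [Multiset.map_cons, Multiset.prod_cons]
  calc f a * (t.map f).prod ≤ f a * (t.map g).prod :=
        mul_le_mul_of_nonneg_left
          (Multiset.prod_map_le_prod_map₀ f g h0.2 fun i hi => (h.2 i hi).le) h0.1
    _ < g a * (t.map g).prod :=
        mul_lt_mul_of_pos_right h.1
          (Multiset.prod_pos fun x hx => by
            obtain ⟨i, hi, rfl⟩ := Multiset.mem_map.1 hx
            exact (h0.2 i hi).trans_lt (h.2 i hi))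

theorem norm_aeval_sq_eq_prod (q : ℝ[X]) (w : ℂ) :
    ‖aeval w q‖ ^ 2 =
      ‖q.leadingCoeff‖ ^ 2 * ((q.aroots ℂ).map fun r => ‖w - r‖ * ‖conj w - r‖).prod := by
  have hnorm (v : ℂ) :
      ‖aeval v q‖ = ‖q.leadingCoeff‖ * ((q.aroots ℂ).map fun r => ‖v - r‖).prod := by
    rw [aeval_def, ← eval_map, (IsAlgClosed.splits _).eval_eq_prod_roots, norm_mul,
      leadingCoeff_map_of_injective (algebraMap ℝ ℂ).injective, Complex.coe_algebraMap,
      Complex.norm_real, ← normHom_apply (α := ℂ), map_multiset_prod, Multiset.map_map, aroots_def]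
    rfl
  have hconj : ‖aeval w q‖ = ‖aeval (conj w) q‖ := by rw [aeval_conj, norm_conj]
  rw [sq]
  nth_rewrite 2 [hconj]
  rw [hnorm, hnorm, Multiset.prod_map_mul]
  ring

theorem norm_mul_norm_conj_lt (z r : ℂ) {c : ℝ} (hcz : 0 < c * z.im)
    (hr : r.im ^ 2 < z.im ^ 2 + c ^ 2) :
    ‖z - c * I - r‖ * ‖conj (z - c * I) - r‖ < ‖z + c * I - r‖ * ‖conj (z + c * I) - r‖ := by
  refine lt_of_pow_lt_pow_left₀ 2 (by positivity) ?_
  simp only [mul_pow, Complex.sq_norm, normSq_apply]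
  simp only [sub_re, add_re, sub_im, add_im, conj_re, conj_im, mul_re, mul_im, ofReal_re,
    ofReal_im, I_re, I_im]
  ring_nf
  -- the difference of the two sides is `8 c (Im z) ((Re (z - r))² + (Im z)² + c² - (Im r)²)`
  nlinarith [mul_pos hcz (by nlinarith [sq_nonneg (z.re - r.re)] :
    0 < (z.re - r.re) ^ 2 + z.im ^ 2 + c ^ 2 - r.im ^ 2)]

theorem im_sq_le_of_aeval_add_add_aeval_sub_of_pos (q : ℝ[X]) {B : ℝ}
    (hq : ∀ w : ℂ, aeval w q = 0 → w.im ^ 2 ≤ B) {c : ℝ} {z : ℂ} (hcz : 0 < c * z.im)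
    (hz : aeval (z + c * I) q + aeval (z - c * I) q = 0) : z.im ^ 2 ≤ B - c ^ 2 := by
  by_contra! hlt
  have hq0 : q ≠ 0 := by
    rintro rfl
    have := hq ((|B| + 1 : ℝ) * I) (map_zero _)
    simp only [mul_im, ofReal_re, I_im, ofReal_im, I_re] at this
    nlinarith [le_abs_self B]
  have hroots : q.aroots ℂ ≠ 0 := by
    intro h
    have hdeg : q.natDegree = 0 := by
      rw [← IsAlgClosed.card_aroots_eq_natDegree (B := ℂ), h, Multiset.card_zero]
    rw [eq_C_of_natDegree_eq_zero hdeg, aeval_C, aeval_C, ← two_mul] at hz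
    simp only [mul_eq_zero, two_ne_zero, false_or, map_eq_zero_iff _ (algebraMap ℝ ℂ).injective]
      at hz
    exact hq0 (by rw [eq_C_of_natDegree_eq_zero hdeg, hz, C_0])
  have hlc : 0 < ‖q.leadingCoeff‖ ^ 2 := by
    have := leadingCoeff_ne_zero.2 hq0
    positivity
  have hprod := Multiset.prod_map_lt_prod_map_of_nonneg hroots _ _
    (fun r _ => by positivity) fun r hr =>
      norm_mul_norm_conj_lt z r hcz (by
        have := hq r (mem_aroots.1 hr).2
        linarith)
  have hnorm : ‖aeval (z - c * I) q‖ ^ 2 = ‖aeval (z + c * I) q‖ ^ 2 := by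
    rw [eq_neg_of_add_eq_zero_left hz, norm_neg]
  rw [norm_aeval_sq_eq_prod, norm_aeval_sq_eq_prod] at hnorm
  exact hprod.ne (mul_left_cancel₀ hlc.ne' hnorm)

theorem im_sq_le_of_aeval_add_add_aeval_sub (q : ℝ[X]) {B : ℝ}
    (hq : ∀ w : ℂ, aeval w q = 0 → w.im ^ 2 ≤ B) (c : ℝ) {z : ℂ}
    (hz : aeval (z + c * I) q + aeval (z - c * I) q = 0) : z.im ^ 2 ≤ max (B - c ^ 2) 0 := by
  rcases lt_trichotomy (c * z.im) 0 with hneg | hzero | hpos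
  · have hz' : aeval (z + (-c : ℝ) * I) q + aeval (z - (-c : ℝ) * I) q = 0 := by
      push_cast
      rw [neg_mul, ← sub_eq_add_neg, sub_neg_eq_add, add_comm]
      exact hz
    have := im_sq_le_of_aeval_add_add_aeval_sub_of_pos q hq (by linarith) hz'
    rw [neg_sq] at this
    exact le_max_of_le_left this
  · rcases mul_eq_zero.1 hzero with rfl | him
    · refine le_max_of_le_left ?_
      simp only [ofReal_zero, zero_mul, add_zero, sub_zero, ← two_mul] at hz
      simpa using hq z ((mul_eq_zero.1 hz).resolve_left two_ne_zero)
    · rw [him]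
      simp
  · exact le_max_of_le_left (im_sq_le_of_aeval_add_add_aeval_sub_of_pos q hq hpos hz)

theorem im_sq_le_of_sinOverD_div_pow (p : ℝ[X]) {B : ℝ} (m : ℕ) {a : ℝ}
    (hB : ∀ w : ℂ, aeval w (sinOverD (a / 2 ^ m) p) = 0 → w.im ^ 2 ≤ B) {z : ℂ}
    (hz : aeval z (sinOverD a p) = 0) :
    z.im ^ 2 ≤ max (B - a ^ 2 * (1 - (1 / 4) ^ m) / 3) 0 := by
  induction m generalizing a z with
  | zero =>
    simp only [pow_zero, div_one, sub_self, mul_zero, zero_div, sub_zero] at hB ⊢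
    exact le_max_of_le_left (hB z hz)
  | succ m ih =>
    have hB' : ∀ w : ℂ, aeval w (sinOverD (a / 2 / 2 ^ m) p) = 0 → w.im ^ 2 ≤ B := by
      simpa only [pow_succ, div_div, mul_comm (2 : ℝ)] using hB
    rw [← mul_div_cancel₀ a (two_ne_zero' ℝ), aeval_sinOverD_two_mul] at hz
    set c := a / 2
    calc z.im ^ 2
        ≤ max (max (B - c ^ 2 * (1 - (1 / 4) ^ m) / 3) 0 - c ^ 2) 0 :=
          im_sq_le_of_aeval_add_add_aeval_sub _ (fun w hw => ih hB' hw) c hz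
      _ ≤ max (B - c ^ 2 * (1 - (1 / 4) ^ m) / 3 - c ^ 2) 0 := by
          rw [← max_sub_sub_right]
          exact max_le (max_le (le_max_left _ _) (le_max_of_le_right (by linarith [sq_nonneg c])))
            (le_max_right _ _)
      _ = max (B - a ^ 2 * (1 - (1 / 4) ^ (m + 1)) / 3) 0 := by
          congr 1
          simp only [c]
          ring

theorem norm_sub_lt_of_lt_mul_max {E : Type*} [SeminormedAddCommGroup E] {z b : E} {t R : ℝ}
    (ht₀ : 0 ≤ t) (ht : t ≤ 1 / 2) (hR : 1 ≤ R) (hb : ‖b‖ ≤ R) (h : ‖z - b‖ < t * max ‖z‖ 1) :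
    ‖z - b‖ < t * (2 * R) := by
  have hz : ‖z‖ ≤ 2 * R := by
    have h1 : ‖z‖ ≤ ‖b‖ + ‖z - b‖ := norm_le_norm_add_norm_sub' z b
    have h2 : t * max ‖z‖ 1 ≤ max ‖z‖ 1 / 2 := by nlinarith [le_max_right ‖z‖ 1]
    rcases le_total ‖z‖ 1 with h' | h'
    · linarith
    · rw [max_eq_left h'] at h2 h
      linarith
  exact h.trans_le (by gcongr; exact max_le hz (by linarith))

theorem eventually_exists_root_near_of_tendsto_coeff {ι : Type*} {F : Filter ι} {p : ℝ[X]}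
    (hp : p ≠ 0) {f : ι → ℝ[X]} (hdeg : ∀ i, (f i).natDegree ≤ p.natDegree)
    (hf : ∀ k, Tendsto (fun i => (f i).coeff k) F (𝓝 (p.coeff k))) {δ : ℝ} (hδ : 0 < δ) :
    ∀ᶠ i in F, ∀ z : ℂ, aeval z (f i) = 0 → ∃ b : ℂ, aeval b p = 0 ∧ ‖z - b‖ < δ := by
  set n := p.natDegree
  have hlc : p.leadingCoeff ≠ 0 := leadingCoeff_ne_zero.2 hp
  set g := p * C p.leadingCoeff⁻¹
  have hgdeg : g.natDegree = n := natDegree_mul_C (inv_ne_zero hlc)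
  set R : ℝ := (cauchyBound (p.map (algebraMap ℝ ℂ)) : ℝ)
  have hR : 1 ≤ R := by simp [R]
  have hroot_le (b : ℂ) (hb : aeval b p = 0) : ‖b‖ ≤ R :=
    (IsRoot.norm_lt_cauchyBound (Polynomial.map_ne_zero hp)
      (by rwa [IsRoot.def, eval_map_algebraMap])).le
  set t := min (1 / 2) (δ / (2 * R))
  have ht : 0 < t := lt_min (by norm_num) (by positivity)
  set η := t ^ n / (n + 1)
  have hη : 0 < η := by positivity
  have hclose : ∀ᶠ i in F, ∀ k ∈ range (n + 1),
      ‖g.coeff k - (f i * C ((f i).coeff n)⁻¹).coeff k‖ < η := by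
    rw [eventually_all_finset]
    intro k _
    have hlim : Tendsto (fun i => (f i * C ((f i).coeff n)⁻¹).coeff k) F (𝓝 (g.coeff k)) := by
      simp only [g, coeff_mul_C]
      exact (hf k).mul ((hf n).inv₀ hlc)
    exact (Metric.tendsto_nhds.1 hlim η hη).mono fun i hi => by rwa [dist_comm, dist_eq_norm] at hi
  filter_upwards [(hf n).eventually_ne hlc, hclose] with i hi hik z hz
  have hfdeg : (f i).natDegree = n := le_antisymm (hdeg i) (le_natDegree_of_ne_zero hi)
  have hfi0 : f i ≠ 0 := by rintro h; simp [h] at hi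
  have hmonic : (f i * C ((f i).coeff n)⁻¹).Monic := by
    simpa [leadingCoeff, hfdeg] using monic_mul_leadingCoeff_inv hfi0
  have hmdeg : (f i * C ((f i).coeff n)⁻¹).natDegree = n := by
    rw [natDegree_mul_C (inv_ne_zero hi), hfdeg]
  have hcoeff (k : ℕ) : ‖g.coeff k - (f i * C ((f i).coeff n)⁻¹).coeff k‖ < η := by
    rcases lt_or_ge k (n + 1) with hk | hk
    · exact hik k (mem_range.2 hk)
    · rw [coeff_eq_zero_of_natDegree_lt (by omega), coeff_eq_zero_of_natDegree_lt (by omega),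
        sub_zero, norm_zero]
      exact hη
  obtain ⟨b, hb, hzb⟩ := exists_aroots_norm_sub_lt_of_norm_coeff_sub_lt (L := ℂ) hη
    (a := z) (by simp [hz]) hmonic (monic_mul_leadingCoeff_inv hp) (by rw [hgdeg, hmdeg]) hcoeff
    (IsAlgClosed.splits _)
  have hbp : aeval b p = 0 := by
    simpa [g, hlc] using (mem_aroots.1 hb).2
  refine ⟨b, hbp, ?_⟩
  have hn : n ≠ 0 := (natDegree_pos_of_aeval_root hp hbp fun x hx => by simpa using hx).ne'
  rw [hmdeg, show ((n : ℝ) + 1) * η = t ^ n by simp only [η]; field_simp,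
    Real.pow_rpow_inv_natCast ht.le hn] at hzb
  calc ‖z - b‖ < t * (2 * R) :=
        norm_sub_lt_of_lt_mul_max ht.le (min_le_left _ _) hR (hroot_le b hbp) hzb
    _ ≤ δ / (2 * R) * (2 * R) := by gcongr; exact min_le_right _ _
    _ = δ := by field_simp

/-- `sin (c D) / (c D)` applied to `p`. -/
noncomputable def sincD (c : ℝ) (p : ℝ[X]) : ℝ[X] :=
  ∑ k ∈ range (p.natDegree / 2 + 1),
    C ((-1 : ℝ) ^ k * c ^ (2 * k) / (2 * k + 1)!) * derivative^[2 * k] p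

theorem sinOverD_eq_C_mul_sincD (c : ℝ) (p : ℝ[X]) : sinOverD c p = C c * sincD c p := by
  rw [sinOverD, sincD, mul_sum]
  refine sum_congr rfl fun k _ => ?_
  rw [← mul_assoc, ← C_mul]
  ring_nf

theorem sincD_zero (p : ℝ[X]) : sincD 0 p = p := by
  rw [sincD, sum_eq_single 0 (fun k _ hk => by simp [hk]) (by simp)]
  simp

theorem natDegree_sincD_le (c : ℝ) (p : ℝ[X]) : (sincD c p).natDegree ≤ p.natDegree :=
  natDegree_sum_le_of_forall_le _ _ fun _ _ =>
    (natDegree_C_mul_le _ _).trans ((natDegree_iterate_derivative _ _).trans (Nat.sub_le _ _))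

theorem continuous_coeff_sincD (p : ℝ[X]) (k : ℕ) : Continuous fun c => (sincD c p).coeff k := by
  simp only [sincD, finsetSum_coeff, coeff_C_mul]
  fun_prop

theorem eventually_im_sq_le_of_sinOverD_div_pow {p : ℝ[X]} (hp : p ≠ 0) {μ l : ℝ} (hl : l ≠ 0)
    (hroots : ∀ z : ℂ, aeval z p = 0 → |z.im| ≤ μ) {δ : ℝ} (hδ : 0 < δ) :
    ∀ᶠ m in atTop, ∀ w : ℂ, aeval w (sinOverD (l / 2 ^ m) p) = 0 → w.im ^ 2 ≤ (μ + δ) ^ 2 := by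
  have hscale : Tendsto (fun m : ℕ => l / 2 ^ m) atTop (𝓝 0) := by
    simpa [div_eq_mul_inv, inv_pow] using (tendsto_pow_atTop_nhds_zero_of_lt_one
      (r := (2 : ℝ)⁻¹) (by norm_num) (by norm_num)).const_mul l
  have hcoeff (k : ℕ) :
      Tendsto (fun m : ℕ => (sincD (l / 2 ^ m) p).coeff k) atTop (𝓝 (p.coeff k)) := by
    have := (continuous_coeff_sincD p k).tendsto 0
    rw [sincD_zero] at this
    exact this.comp hscale
  filter_upwards [eventually_exists_root_near_of_tendsto_coeff hp (fun m => natDegree_sincD_le _ p)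
    hcoeff hδ] with m hm w hw
  rw [sinOverD_eq_C_mul_sincD, map_mul, aeval_C, mul_eq_zero,
    map_eq_zero_iff _ (algebraMap ℝ ℂ).injective] at hw
  obtain ⟨b, hb, hwb⟩ := hm w (hw.resolve_left (by positivity))
  have him : |w.im| ≤ μ + δ :=
    calc |w.im| ≤ |b.im| + |(w - b).im| := by
          rw [sub_im]; linarith [abs_sub_abs_le_abs_sub w.im b.im]
      _ ≤ μ + δ := add_le_add (hroots b hb) ((abs_im_le_norm _).trans hwb.le)
  simpa using pow_le_pow_left₀ (abs_nonneg _) him 2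

theorem im_sq_le_of_aeval_sinOverD_eq_zero {p : ℝ[X]} (hp : p ≠ 0) {μ l : ℝ} (hl : l ≠ 0)
    (hroots : ∀ z : ℂ, aeval z p = 0 → |z.im| ≤ μ) {δ : ℝ} (hδ : 0 < δ) {z : ℂ}
    (hz : aeval z (sinOverD l p) = 0) : z.im ^ 2 ≤ max ((μ + δ) ^ 2 - l ^ 2 / 3) 0 := by
  have hlim : Tendsto (fun m : ℕ => max ((μ + δ) ^ 2 - l ^ 2 * (1 - (1 / 4 : ℝ) ^ m) / 3) 0)
      atTop (𝓝 (max ((μ + δ) ^ 2 - l ^ 2 / 3) 0)) := by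
    have hφ : Continuous fun x : ℝ => max ((μ + δ) ^ 2 - l ^ 2 * (1 - x) / 3) 0 := by fun_prop
    simpa [Function.comp_def] using (hφ.tendsto 0).comp
      (tendsto_pow_atTop_nhds_zero_of_lt_one (r := (1 / 4 : ℝ)) (by norm_num) (by norm_num))
  exact ge_of_tendsto hlim <| (eventually_im_sq_le_of_sinOverD_div_pow hp hl hroots hδ).mono
    fun m hm => im_sq_le_of_sinOverD_div_pow p m hm hz

theorem stmt_17_general (p : Polynomial ℝ) (μ l : ℝ) (hl : 0 < l)
    (hroots : ∀ z : ℂ, Polynomial.aeval z p = 0 → |z.im| ≤ μ) :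
    ∀ z : ℂ,
      Polynomial.aeval z
        (∑ k ∈ Finset.range (p.natDegree / 2 + 1),
          Polynomial.C ((-1 : ℝ) ^ k * l ^ (2 * k + 1) / (Nat.factorial (2 * k + 1))) *
            (Polynomial.derivative^[2 * k] p)) = 0 →
      |z.im| ≤ Real.sqrt (max (μ ^ 2 - l ^ 2 / 3) 0) := by
  intro z hz
  have hp : p ≠ 0 := by
    rintro rfl
    have := hroots ((μ + 1 : ℝ) * I) (map_zero _)
    simp only [mul_im, ofReal_re, I_im, ofReal_im, I_re, mul_one, mul_zero, add_zero] at this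
    linarith [le_abs_self (μ + 1)]
  have hlim : Tendsto (fun δ => max ((μ + δ) ^ 2 - l ^ 2 / 3) 0) (𝓝[>] 0)
      (𝓝 (max (μ ^ 2 - l ^ 2 / 3) 0)) := by
    have hφ : Continuous fun δ : ℝ => max ((μ + δ) ^ 2 - l ^ 2 / 3) 0 := by fun_prop
    simpa using (hφ.tendsto 0).mono_left nhdsWithin_le_nhds
  exact Real.abs_le_sqrt <| ge_of_tendsto hlim <| eventually_nhdsWithin_of_forall
    fun δ hδ => im_sq_le_of_aeval_sinOverD_eq_zero hp hl.ne' hroots hδ hz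

theorem stmt_17 (p : Polynomial ℝ) (μ l : ℝ) (hμ : 0 ≤ μ) (hl : 0 < l)
    (hroots : ∀ z : ℂ, Polynomial.aeval z p = 0 → |z.im| ≤ μ) :
    ∀ z : ℂ,
      Polynomial.aeval z
        (∑ k ∈ Finset.range (p.natDegree / 2 + 1),
          Polynomial.C ((-1 : ℝ) ^ k * l ^ (2 * k + 1) / (Nat.factorial (2 * k + 1))) *
            (Polynomial.derivative^[2 * k] p)) = 0 →
      |z.im| ≤ Real.sqrt (max (μ ^ 2 - l ^ 2 / 3) 0) :=
  stmt_17_general p μ l hl hroots
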